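/- arXiv:1803.08962 — 6 statements merged into one kernel-verified Lean document; each statement's English description precedes it below -/
import Mathlib

section
/- Let α ≥ 0, β > 0, p > 0, Γ > 0, z := βp + α > 0, B := z/Γ + α(1+β)/(zβ) and Δ := B²/4 − z/(Γβ). If Δ ≥ 0, then both roots λ₁ = −B/2 − √Δ and λ₂ = −B/2 + √Δ of the quadratic λ² + Bλ + z/(Γβ) are real and strictly negative; in particular the stationary point (r*, n*) of the dynamical system is a stable node. -/
/-! When `B > 0` and `C > 0`, the square root of `B²/4 − C` is strictly smaller than `B/2`,
so both roots `−B/2 ± √(B²/4 − C)` of `λ² + Bλ + C` are negative. For the characteristic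
polynomial both coefficients are positive because `z = βp + α > 0`. -/

lemma quadratic_eq_zero_at_neg_half_pm_sqrt {B C : ℝ} (h : 0 ≤ B ^ 2 / 4 - C) :
    (-B / 2 - √(B ^ 2 / 4 - C)) ^ 2 + B * (-B / 2 - √(B ^ 2 / 4 - C)) + C = 0 ∧
      (-B / 2 + √(B ^ 2 / 4 - C)) ^ 2 + B * (-B / 2 + √(B ^ 2 / 4 - C)) + C = 0 := by
  have hs := Real.sq_sqrt h
  exact ⟨by linear_combination hs, by linear_combination hs⟩

lemma sqrt_sq_div_four_sub_lt_half {B C : ℝ} (hB : 0 < B) (hC : 0 < C) :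
    √(B ^ 2 / 4 - C) < B / 2 := by
  rw [Real.sqrt_lt' (by positivity)]
  linarith [show (B / 2) ^ 2 = B ^ 2 / 4 by ring]

lemma neg_half_pm_sqrt_neg {B C : ℝ} (hB : 0 < B) (hC : 0 < C) :
    -B / 2 - √(B ^ 2 / 4 - C) < 0 ∧ -B / 2 + √(B ^ 2 / 4 - C) < 0 := by
  have hlt := sqrt_sq_div_four_sub_lt_half hB hC
  have hnonneg := Real.sqrt_nonneg (B ^ 2 / 4 - C)
  constructor <;> linarith

/-- If the discriminant quantity `Δ = B²/4 − z/(Γβ)` of the characteristic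
polynomial `λ² + Bλ + z/(Γβ)` (where `z = βp + α`, `B = z/Γ + α(1+β)/(zβ)`)
is nonnegative, then both roots `λ₁ = −B/2 − √Δ` and `λ₂ = −B/2 + √Δ` are real
roots of the quadratic and are strictly negative: the stationary point is a
stable node. -/
theorem stable_node_of_nonneg_discriminant (α β p Γ : ℝ) (hα : 0 ≤ α) (hβ : 0 < β)
    (hp : 0 < p) (hΓ : 0 < Γ) :
    let z : ℝ := β * p + α
    let B : ℝ := z / Γ + α * (1 + β) / (z * β)
    let Δ : ℝ := B ^ 2 / 4 - z / (Γ * β)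
    0 ≤ Δ →
      let lam1 : ℝ := -B / 2 - Real.sqrt Δ
      let lam2 : ℝ := -B / 2 + Real.sqrt Δ
      (lam1 ^ 2 + B * lam1 + z / (Γ * β) = 0) ∧
      (lam2 ^ 2 + B * lam2 + z / (Γ * β) = 0) ∧
      lam1 < 0 ∧ lam2 < 0 := by
  intro z B Δ hΔ lam1 lam2
  have hz : 0 < z := by positivity
  obtain ⟨hroot1, hroot2⟩ := quadratic_eq_zero_at_neg_half_pm_sqrt hΔ
  obtain ⟨hneg1, hneg2⟩ :=
    neg_half_pm_sqrt_neg (B := B) (C := z / (Γ * β)) (by positivity) (by positivity)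
  exact ⟨hroot1, hroot2, hneg1, hneg2⟩
end

section
/- Let α = 0, β > 0, p > 0 and Γ₀ := β²p/4. Define the oscillation frequency ω(Γ) := √(p/Γ − (βp)²/(4Γ²)) for Γ > Γ₀ (so that ω(Γ)² = −Δ(Γ) > 0). Then ω is strictly increasing on (Γ₀, Γ₀*] and strictly decreasing on [Γ₀*, ∞), where Γ₀* := β²p/2; its maximum value is ω(Γ₀*) = 1/β; and ω(Γ) → 0 as Γ → ∞. -/
/-!
Completing the square in `u = Γ₀*/Γ` gives
`p/Γ − (βp)²/(4Γ²) = β⁻² (1 − (u − 1)²)`, so `ω = β⁻¹ √(1 − (u − 1)²) ≤ β⁻¹`, with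
equality exactly at `u = 1`. As `Γ` increases through `(Γ₀, ∞)`, `u` decreases
through `(0, 2)`, passing `1` at `Γ = Γ₀*`, so the downward parabola in `u` first
rises and then falls.
-/

open Filter Topology Set Real

theorem strictMonoOn_sub_sq_sub (c m : ℝ) :
    StrictMonoOn (fun x : ℝ => c - (x - m) ^ 2) (Iic m) := by
  intro a ha b hb hab
  simp only [mem_Iic] at ha hb
  nlinarith

theorem strictAntiOn_sub_sq_sub (c m : ℝ) :
    StrictAntiOn (fun x : ℝ => c - (x - m) ^ 2) (Ici m) := by
  intro a ha b hb hab
  simp only [mem_Ici] at ha hb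
  nlinarith

theorem strictAntiOn_const_div {c : ℝ} (hc : 0 < c) :
    StrictAntiOn (fun x : ℝ => c / x) (Ioi 0) :=
  fun _ ha _ _ hab => div_lt_div_of_pos_left hc ha hab

section Parabola

variable {a : ℝ}

theorem one_sub_sq_div_sub_one_nonneg (ha : 0 < a) {x : ℝ} (hx : a / 2 ≤ x) :
    0 ≤ 1 - (a / x - 1) ^ 2 := by
  have hx₀ : 0 < x := (half_pos ha).trans_le hx
  have hu : a / x ≤ 2 := by rw [div_le_iff₀ hx₀]; linarith
  nlinarith [div_pos ha hx₀]

theorem strictMonoOn_sqrt_one_sub_sq_div_sub_one (ha : 0 < a) :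
    StrictMonoOn (fun x => √(1 - (a / x - 1) ^ 2)) (Ioc (a / 2) a) := by
  have hpos : Ioc (a / 2) a ⊆ Ioi 0 := fun x hx => (half_pos ha).trans hx.1
  refine strictMonoOn_sqrt.comp ?_ fun x hx => one_sub_sq_div_sub_one_nonneg ha hx.1.le
  refine (strictAntiOn_sub_sq_sub 1 1).comp ((strictAntiOn_const_div ha).mono hpos) ?_
  intro x hx
  exact (one_le_div₀ (hpos hx)).2 hx.2

theorem strictAntiOn_sqrt_one_sub_sq_div_sub_one (ha : 0 < a) :
    StrictAntiOn (fun x => √(1 - (a / x - 1) ^ 2)) (Ici a) := by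
  have hpos : Ici a ⊆ Ioi 0 := fun x hx => ha.trans_le hx
  refine strictMonoOn_sqrt.comp_strictAntiOn ?_
    fun x hx => one_sub_sq_div_sub_one_nonneg ha (le_trans (by linarith) hx)
  refine (strictMonoOn_sub_sq_sub 1 1).comp_strictAntiOn
    ((strictAntiOn_const_div ha).mono hpos) ?_
  intro x hx
  exact (div_le_one₀ (hpos hx)).2 (mem_Ici.1 hx)

end Parabola

theorem sqrt_div_sub_sq_div_eq {β p Γ : ℝ} (hβ : 0 < β) (hΓ : Γ ≠ 0) :
    √(p / Γ - (β * p) ^ 2 / (4 * Γ ^ 2)) = β⁻¹ * √(1 - (β ^ 2 * p / 2 / Γ - 1) ^ 2) := by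
  have hsq : p / Γ - (β * p) ^ 2 / (4 * Γ ^ 2) =
      β⁻¹ ^ 2 * (1 - (β ^ 2 * p / 2 / Γ - 1) ^ 2) := by
    field_simp
    ring
  rw [hsq, sqrt_mul (sq_nonneg _), sqrt_sq (inv_nonneg.2 hβ.le)]

theorem tendsto_sqrt_div_sub_div_sq_atTop (p c : ℝ) :
    Tendsto (fun Γ : ℝ => √(p / Γ - c / (4 * Γ ^ 2))) atTop (𝓝 0) := by
  have hp : Tendsto (fun Γ : ℝ => p / Γ) atTop (𝓝 0) :=
    tendsto_const_nhds.div_atTop tendsto_id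
  have hc : Tendsto (fun Γ : ℝ => c / (4 * Γ ^ 2)) atTop (𝓝 0) :=
    tendsto_const_nhds.div_atTop <|
      (tendsto_pow_atTop two_ne_zero).const_mul_atTop four_pos
  simpa using (hp.sub hc).sqrt

/-- For `α = 0`, the oscillation frequency `ω(Γ) = √(p/Γ − (βp)²/(4Γ²))`
(the imaginary part of the eigenvalues for `Γ > Γ₀ = β²p/4`) is strictly
increasing on `(Γ₀, Γ₀*]` and strictly decreasing on `[Γ₀*, ∞)` where
`Γ₀* = β²p/2`; its maximum value is `ω(Γ₀*) = 1/β`, and `ω(Γ) → 0` as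
`Γ → ∞`. -/
theorem frequency_behaviour_alpha_zero (β p : ℝ) (hβ : 0 < β) (hp : 0 < p) :
    let ω : ℝ → ℝ := fun Γ => Real.sqrt (p / Γ - (β * p) ^ 2 / (4 * Γ ^ 2))
    let Γ₀ : ℝ := β ^ 2 * p / 4
    let Γstar : ℝ := β ^ 2 * p / 2
    StrictMonoOn ω (Set.Ioc Γ₀ Γstar) ∧
      StrictAntiOn ω (Set.Ici Γstar) ∧
      ω Γstar = 1 / β ∧
      (∀ Γ : ℝ, Γ₀ < Γ → ω Γ ≤ 1 / β) ∧
      Tendsto ω atTop (nhds 0) := by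
  intro ω Γ₀ Γstar
  have hstar : 0 < Γstar := by positivity
  have hΓ₀ : Γ₀ = Γstar / 2 := by ring
  have hω : EqOn (fun Γ => β⁻¹ * √(1 - (Γstar / Γ - 1) ^ 2)) ω (Ioi 0) :=
    fun Γ hΓ => (sqrt_div_sub_sq_div_eq hβ (ne_of_gt hΓ)).symm
  refine ⟨?_, ?_, ?_, fun Γ hΓ => ?_, tendsto_sqrt_div_sub_div_sq_atTop p _⟩
  · rw [hΓ₀]
    refine ((strictMono_mul_left_of_pos (inv_pos.2 hβ)).comp_strictMonoOn
      (strictMonoOn_sqrt_one_sub_sq_div_sub_one hstar)).congr (hω.mono fun Γ hΓ => ?_)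
    exact (half_pos hstar).trans hΓ.1
  · refine ((strictMono_mul_left_of_pos (inv_pos.2 hβ)).comp_strictAntiOn
      (strictAntiOn_sqrt_one_sub_sq_div_sub_one hstar)).congr (hω.mono fun Γ hΓ => ?_)
    exact hstar.trans_le hΓ
  · rw [← hω hstar]
    simp [hstar.ne']
  · rw [one_div, ← hω (lt_trans (by positivity) hΓ)]
    exact mul_le_of_le_one_right (inv_nonneg.2 hβ.le)
      (sqrt_le_one.2 (sub_le_self _ (sq_nonneg _)))
end

section
/- Let β > 0 and 0 < α < p, set z := βp + α and Γ* := βz²/(2βp + α(1−β)). Then the function Γ ↦ Δ(Γ) := (1/4)[z/Γ + α(1+β)/(zβ)]² − z/(Γβ) is strictly decreasing on the interval (0, Γ*], tends to +∞ as Γ → 0⁺, and attains at Γ = Γ* its minimum value Δ(Γ*) = −(p−α)/(zβ) < 0. -/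
open Filter Topology Set

/-!
Completing the square in `x = z/Γ` gives `Δ(Γ) = (1/4)(z/Γ - m)² - (p - α)/(zβ)` with
`m = (2βp + α(1 - β))/(zβ) = z/Γ*`, which is positive because `α < p`. Everything then follows from
the shape of `Γ ↦ (z/Γ - m)²`: it vanishes at `Γ = z/m`, blows up at `0⁺`, and decreases on
`(0, z/m]` since `z/Γ - m` is positive and decreasing there.
-/

theorem quarter_mul_add_sq_sub_div (x a b : ℝ) (hb : b ≠ 0) :
    (1 / 4) * (x + a) ^ 2 - x / b = (1 / 4) * (x - (2 / b - a)) ^ 2 + (a / b - 1 / b ^ 2) := by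
  field_simp
  ring

section InvSubSq

variable {z m : ℝ}

theorem strictAntiOn_div_sub_sq (hz : 0 < z) (hm : 0 < m) :
    StrictAntiOn (fun Γ : ℝ => (z / Γ - m) ^ 2) (Ioc 0 (z / m)) := by
  intro x hx y hy hxy
  have hmy : m ≤ z / y := (le_div_comm₀ hy.1 hm).mp hy.2
  have hyx : z / y < z / x := div_lt_div_of_pos_left hz hx.1 hxy
  exact pow_lt_pow_left₀ (by linarith) (by linarith) two_ne_zero

theorem tendsto_div_sub_sq_nhdsGT_zero (hz : 0 < z) (m : ℝ) :
    Tendsto (fun Γ : ℝ => (z / Γ - m) ^ 2) (𝓝[>] 0) atTop := by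
  have hdiv : Tendsto (fun Γ : ℝ => z / Γ) (𝓝[>] 0) atTop := by
    simpa only [div_eq_mul_inv] using tendsto_inv_nhdsGT_zero.const_mul_atTop hz
  exact (tendsto_pow_atTop two_ne_zero).comp (tendsto_atTop_add_const_right _ (-m) hdiv)

theorem strictAntiOn_tendsto_atTop_min_of_eqOn_div_sub_sq (hz : 0 < z) (hm : 0 < m)
    {c : ℝ} {f : ℝ → ℝ} (hf : EqOn f (fun Γ => (1 / 4) * (z / Γ - m) ^ 2 + c) (Ioi 0)) :
    StrictAntiOn f (Ioc 0 (z / m)) ∧ Tendsto f (𝓝[>] 0) atTop ∧ f (z / m) = c ∧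
      ∀ Γ, 0 < Γ → f (z / m) ≤ f Γ := by
  have hzm : 0 < z / m := div_pos hz hm
  have hmin : f (z / m) = c := by
    rw [hf hzm]
    dsimp only
    rw [div_div_cancel₀ hz.ne', sub_self]
    ring
  refine ⟨?_, ?_, hmin, fun Γ hΓ => ?_⟩
  · intro x hx y hy hxy
    rw [hf hx.1, hf hy.1]
    have := strictAntiOn_div_sub_sq hz hm hx hy hxy
    dsimp only at this ⊢
    linarith
  · refine Tendsto.congr' (EventuallyEq.symm ?_)
      (tendsto_atTop_add_const_right _ c
        ((tendsto_div_sub_sq_nhdsGT_zero hz m).const_mul_atTop (by norm_num : (0 : ℝ) < 1 / 4)))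
    filter_upwards [self_mem_nhdsWithin] with Γ hΓ using hf hΓ
  · rw [hmin, hf hΓ]
    dsimp only
    nlinarith [sq_nonneg (z / Γ - m)]

end InvSubSq

/-- For `0 < α < p`, `β > 0`, `z = βp + α` and `Γ* = βz²/(2βp + α(1−β))`,
the discriminant `Δ(Γ) = (1/4)[z/Γ + α(1+β)/(zβ)]² − z/(Γβ)` is strictly
decreasing on `(0, Γ*]`, tends to `+∞` as `Γ → 0⁺`, and attains at `Γ*` its
minimum value `Δ(Γ*) = −(p−α)/(zβ) < 0`. -/
theorem discriminant_decreasing_part (α β p : ℝ) (hβ : 0 < β) (hα : 0 < α)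
    (hαp : α < p) :
    let z : ℝ := β * p + α
    let Γstar : ℝ := β * z ^ 2 / (2 * β * p + α * (1 - β))
    let Δ : ℝ → ℝ := fun Γ =>
      (1 / 4) * (z / Γ + α * (1 + β) / (z * β)) ^ 2 - z / (Γ * β)
    StrictAntiOn Δ (Set.Ioc 0 Γstar) ∧
      Tendsto Δ (nhdsWithin 0 (Set.Ioi 0)) atTop ∧
      Δ Γstar = -(p - α) / (z * β) ∧
      Δ Γstar < 0 ∧
      ∀ Γ : ℝ, 0 < Γ → Δ Γstar ≤ Δ Γ := by
  intro z Γstar Δ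
  have hz : 0 < z := by
    have : 0 < β * p := mul_pos hβ (hα.trans hαp)
    simp only [z]
    linarith
  have hD : 0 < 2 * β * p + α * (1 - β) := by nlinarith
  set m := (2 * β * p + α * (1 - β)) / (z * β)
  have hm : 0 < m := div_pos hD (mul_pos hz hβ)
  have hΓstar : Γstar = z / m := by
    simp only [Γstar, m]
    field_simp
  have hshift : 2 / β - α * (1 + β) / (z * β) = m := by
    simp only [m]
    field_simp
    simp only [z]
    ring
  have hconst : α * (1 + β) / (z * β) / β - 1 / β ^ 2 = -(p - α) / (z * β) := by
    field_simp
    simp only [z]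
    ring
  have hΔ : EqOn Δ (fun Γ => (1 / 4) * (z / Γ - m) ^ 2 + -(p - α) / (z * β)) (Ioi 0) := by
    intro Γ _
    simp only [Δ]
    rw [← div_div z Γ β, quarter_mul_add_sq_sub_div _ _ _ hβ.ne', hshift, hconst]
  obtain ⟨hanti, htendsto, hmin, hle⟩ :=
    strictAntiOn_tendsto_atTop_min_of_eqOn_div_sub_sq hz hm hΔ
  have hneg : -(p - α) / (z * β) < 0 :=
    div_neg_of_neg_of_pos (by linarith) (by positivity)
  rw [hΓstar]
  exact ⟨hanti, htendsto, hmin, hmin ▸ hneg, hle⟩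
end

section
/- Let β > 0 and 0 < α < p, and set z := βp + α. Define Γ₁ := (β²z²/(α²(1+β)²))·[(2z − α(1+β))/β − 2√(z(p−α)/β)] and Γ₂ := (β²z²/(α²(1+β)²))·[(2z − α(1+β))/β + 2√(z(p−α)/β)]. Then 0 < Γ₁ < Γ₂, Δ(Γ₁) = Δ(Γ₂) = 0, and Γ₁, Γ₂ are the only zeros of Δ on (0, ∞), where Δ(Γ) := (1/4)[z/Γ + α(1+β)/(zβ)]² − z/(Γβ). -/
/-!
Writing `w = α(1+β)`, clearing denominators turns `Δ(Γ) = 0` (for `Γ ≠ 0`) into the quadratic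
`w²Γ² − 2z²β(2z − w)Γ + z⁴β² = 0`, whose discriminant is `16z⁵β²(z − w)`; the quadratic
formula gives `Γ₁, Γ₂`, and `z − w = β(p − α) > 0` makes both roots real, distinct and positive.
-/

open Real

noncomputable def stabilityDiscriminant (z w β Γ : ℝ) : ℝ :=
  (1 / 4) * (z / Γ + w / (z * β)) ^ 2 - z / (Γ * β)

noncomputable def criticalGamma (z w β σ : ℝ) : ℝ :=
  β ^ 2 * z ^ 2 / w ^ 2 * ((2 * z - w) / β + σ * 2 * √(z * (z - w) / β ^ 2))

section

variable {z w β : ℝ}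

lemma stabilityDiscriminant_mul_eq (hz : z ≠ 0) (hβ : β ≠ 0) {Γ : ℝ} (hΓ : Γ ≠ 0) :
    stabilityDiscriminant z w β Γ * (4 * z ^ 2 * β ^ 2 * Γ ^ 2) =
      w ^ 2 * (Γ * Γ) + -(2 * z ^ 2 * β * (2 * z - w)) * Γ + z ^ 4 * β ^ 2 := by
  unfold stabilityDiscriminant
  field_simp
  ring

lemma discrim_stabilityQuadratic (hβ : β ≠ 0) (hzw : 0 ≤ z * (z - w)) :
    discrim (w ^ 2) (-(2 * z ^ 2 * β * (2 * z - w))) (z ^ 4 * β ^ 2) =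
      (4 * z ^ 2 * β ^ 2 * √(z * (z - w) / β ^ 2)) *
        (4 * z ^ 2 * β ^ 2 * √(z * (z - w) / β ^ 2)) := by
  have hs : (β * √(z * (z - w) / β ^ 2)) ^ 2 = z * (z - w) := by
    rw [mul_pow, sq_sqrt (by positivity)]
    field_simp
  rw [discrim]
  linear_combination (-16 * z ^ 4 * β ^ 2) * hs

lemma stabilityDiscriminant_eq_zero_iff (hz : z ≠ 0) (hβ : β ≠ 0) (hw : w ≠ 0)
    (hzw : 0 ≤ z * (z - w)) {Γ : ℝ} (hΓ : Γ ≠ 0) :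
    stabilityDiscriminant z w β Γ = 0 ↔
      Γ = criticalGamma z w β (-1) ∨ Γ = criticalGamma z w β 1 := by
  rw [or_comm, ← mul_eq_zero_iff_right (by simp [hz, hβ, hΓ] : 4 * z ^ 2 * β ^ 2 * Γ ^ 2 ≠ 0),
    stabilityDiscriminant_mul_eq hz hβ hΓ,
    quadratic_eq_zero_iff (pow_ne_zero 2 hw) (discrim_stabilityQuadratic hβ hzw)]
  congr! 2 <;> unfold criticalGamma <;> field_simp <;> ring

lemma criticalGamma_neg_one_pos (hβ : 0 < β) (hw : 0 < w) (hwz : w < z) :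
    0 < criticalGamma z w β (-1) := by
  have hz : 0 < z := hw.trans hwz
  have hzw : 0 < z - w := sub_pos.2 hwz
  set s := √(z * (z - w) / β ^ 2)
  have hs : (β * s) ^ 2 = z * (z - w) := by
    rw [mul_pow, sq_sqrt (by positivity)]
    field_simp
  -- `(2z − w)² − 4z(z − w) = w²`
  have hlt : 2 * (β * s) < 2 * z - w := by nlinarith [sqrt_nonneg (z * (z - w) / β ^ 2)]
  have hbracket : 0 < (2 * z - w) / β + -1 * 2 * s := by
    rw [div_add' _ _ _ hβ.ne']
    exact div_pos (by linarith) hβ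
  exact mul_pos (by positivity) hbracket

lemma criticalGamma_neg_one_lt_one (hβ : 0 < β) (hw : 0 < w) (hwz : w < z) :
    criticalGamma z w β (-1) < criticalGamma z w β 1 := by
  have hz : 0 < z := hw.trans hwz
  have hzw : 0 < z - w := sub_pos.2 hwz
  unfold criticalGamma
  gcongr
  linarith [sqrt_pos.2 (by positivity : 0 < z * (z - w) / β ^ 2)]

end

/-- For `0 < α < p`, `β > 0` and `z = βp + α`, the values
`Γ₁ = (β²z²/(α²(1+β)²))·[(2z − α(1+β))/β − 2√(z(p−α)/β)]` and
`Γ₂ = (β²z²/(α²(1+β)²))·[(2z − α(1+β))/β + 2√(z(p−α)/β)]` satisfy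
`0 < Γ₁ < Γ₂`, are zeros of the discriminant
`Δ(Γ) = (1/4)[z/Γ + α(1+β)/(zβ)]² − z/(Γβ)`, and are the only zeros of `Δ`
on `(0, ∞)`. -/
theorem discriminant_zeros (α β p : ℝ) (hβ : 0 < β) (hα : 0 < α) (hαp : α < p) :
    let z : ℝ := β * p + α
    let Γ₁ : ℝ := (β ^ 2 * z ^ 2 / (α ^ 2 * (1 + β) ^ 2)) *
      ((2 * z - α * (1 + β)) / β - 2 * Real.sqrt (z * (p - α) / β))
    let Γ₂ : ℝ := (β ^ 2 * z ^ 2 / (α ^ 2 * (1 + β) ^ 2)) *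
      ((2 * z - α * (1 + β)) / β + 2 * Real.sqrt (z * (p - α) / β))
    let Δ : ℝ → ℝ := fun Γ =>
      (1 / 4) * (z / Γ + α * (1 + β) / (z * β)) ^ 2 - z / (Γ * β)
    0 < Γ₁ ∧ Γ₁ < Γ₂ ∧ Δ Γ₁ = 0 ∧ Δ Γ₂ = 0 ∧
      ∀ Γ : ℝ, 0 < Γ → Δ Γ = 0 → Γ = Γ₁ ∨ Γ = Γ₂ := by
  intro z Γ₁ Γ₂ Δ
  set w := α * (1 + β)
  have hw : 0 < w := by positivity
  have hwz : w < z := by nlinarith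
  have hsqrt : z * (p - α) / β = z * (z - w) / β ^ 2 := by field_simp; ring
  have hΓ₁ : Γ₁ = criticalGamma z w β (-1) := by
    simp only [Γ₁, criticalGamma, hsqrt]; ring
  have hΓ₂ : Γ₂ = criticalGamma z w β 1 := by
    simp only [Γ₂, criticalGamma, hsqrt]; ring
  have hpos : 0 < Γ₁ := hΓ₁ ▸ criticalGamma_neg_one_pos hβ hw hwz
  have hlt : Γ₁ < Γ₂ := hΓ₁ ▸ hΓ₂ ▸ criticalGamma_neg_one_lt_one hβ hw hwz
  have hzeros (Γ : ℝ) (hΓ : 0 < Γ) : Δ Γ = 0 ↔ Γ = Γ₁ ∨ Γ = Γ₂ := by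
    rw [hΓ₁, hΓ₂]
    exact stabilityDiscriminant_eq_zero_iff (hw.trans hwz).ne' hβ.ne' hw.ne'
      (by nlinarith) hΓ.ne'
  refine ⟨hpos, hlt, (hzeros Γ₁ hpos).2 (.inl rfl), (hzeros Γ₂ (hpos.trans hlt)).2 (.inr rfl),
    fun Γ hΓ => (hzeros Γ hΓ).1⟩
end

section
/- Fix β > 0 and p > 0, and for 0 < α < p define z(α) := βp + α, Γ₁(α) := (β²z(α)²/(α²(1+β)²))·[(2z(α) − α(1+β))/β − 2√(z(α)(p−α)/β)] and Γ₂(α) := (β²z(α)²/(α²(1+β)²))·[(2z(α) − α(1+β))/β + 2√(z(α)(p−α)/β)]. Then, in the high-pumping limit, Γ₁(α) → Γ₀ := β²p/4 and Γ₂(α) → +∞ as α → 0⁺. -/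
/-!
Write `Γ₁,₂ = K(α) (A(α) ∓ B(α))` with `K(α) = β²z²/(α²(1+β)²)`. Both `A` and `B` tend to `2p`
as `α → 0`, so `Γ₂ ~ 4p K(α) → +∞`, while for `Γ₁` the factor `A - B` vanishes and cancels the
pole of `K`: since `z = βp + α`, one has `A² - B² = (α(1+β)/β)²`, hence `Γ₁ = z²/(A + B)`, which
tends to `(βp)²/(4p) = β²p/4`.
-/

open Filter Topology

namespace HighPumping

variable (β p : ℝ)

noncomputable def bracketCentre (α : ℝ) : ℝ := (2 * (β * p + α) - α * (1 + β)) / β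

noncomputable def bracketRadius (α : ℝ) : ℝ := 2 * √((β * p + α) * (p - α) / β)

variable {β p}

lemma bracketCentre_sq_sub_bracketRadius_sq {α : ℝ} (hβ : 0 < β) (hz : 0 ≤ β * p + α)
    (hα : α ≤ p) :
    bracketCentre β p α ^ 2 - bracketRadius β p α ^ 2 = (α * (1 + β) / β) ^ 2 := by
  have hroot : √((β * p + α) * (p - α) / β) ^ 2 = (β * p + α) * (p - α) / β :=
    Real.sq_sqrt (div_nonneg (mul_nonneg hz (sub_nonneg.2 hα)) hβ.le)
  rw [bracketCentre, bracketRadius, mul_pow, hroot]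
  field_simp
  ring

lemma bracketCentre_pos {α : ℝ} (hβ : 0 < β) (hα : 0 ≤ α) (hαp : α < 2 * p) :
    0 < bracketCentre β p α := by
  rw [bracketCentre]
  apply div_pos _ hβ
  nlinarith

lemma bracketRadius_nonneg (α : ℝ) : 0 ≤ bracketRadius β p α := by
  rw [bracketRadius]
  positivity

lemma tendsto_bracketCentre_add_bracketRadius (hβ : 0 < β) (hp : 0 ≤ p) :
    Tendsto (fun α => bracketCentre β p α + bracketRadius β p α) (𝓝 0) (𝓝 (4 * p)) := by
  refine Continuous.tendsto' (by unfold bracketCentre bracketRadius; fun_prop) _ _ ?_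
  have hroot : (β * p + 0) * (p - 0) / β = p ^ 2 := by
    field_simp
    ring
  rw [bracketCentre, bracketRadius, hroot, Real.sqrt_sq hp]
  field_simp
  ring

lemma sub_eq_div_add_of_sq_sub_sq {a b c : ℝ} (h : a ^ 2 - b ^ 2 = c) (hab : a + b ≠ 0) :
    a - b = c / (a + b) := by
  rw [eq_div_iff hab]
  linear_combination h

lemma mul_bracketCentre_sub_bracketRadius {α : ℝ} (hβ : 0 < β) (hα : 0 < α) (hαp : α ≤ p) :
    β ^ 2 * (β * p + α) ^ 2 / (α ^ 2 * (1 + β) ^ 2) *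
        (bracketCentre β p α - bracketRadius β p α) =
      (β * p + α) ^ 2 / (bracketCentre β p α + bracketRadius β p α) := by
  have hpos : 0 < bracketCentre β p α + bracketRadius β p α :=
    add_pos_of_pos_of_nonneg (bracketCentre_pos hβ hα.le (by linarith)) (bracketRadius_nonneg α)
  have hp : 0 < p := hα.trans_le hαp
  rw [sub_eq_div_add_of_sq_sub_sq
    (bracketCentre_sq_sub_bracketRadius_sq hβ (by positivity) hαp) hpos.ne']
  field_simp

lemma tendsto_div_sq_nhdsGT_zero_atTop {f : ℝ → ℝ} {L : ℝ} (hf : Tendsto f (𝓝[>] 0) (𝓝 L))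
    (hL : 0 < L) : Tendsto (fun x => f x / x ^ 2) (𝓝[>] 0) atTop := by
  have hinv_sq : Tendsto (fun x : ℝ => x⁻¹ ^ 2) (𝓝[>] 0) atTop :=
    (tendsto_pow_atTop two_ne_zero).comp tendsto_inv_nhdsGT_zero
  simpa only [inv_pow, div_eq_mul_inv] using hf.pos_mul_atTop hL hinv_sq

end HighPumping

open HighPumping

/-- Fix `β > 0`, `p > 0`. With `z(α) = βp + α` and the two discriminant zeros
`Γ₁(α), Γ₂(α)` as in the paper, in the high-pumping limit `α → 0⁺` one has
`Γ₁(α) → Γ₀ = β²p/4` and `Γ₂(α) → +∞`. -/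
theorem high_pumping_limit (β p : ℝ) (hβ : 0 < β) (hp : 0 < p) :
    let z : ℝ → ℝ := fun α => β * p + α
    let Γ₁ : ℝ → ℝ := fun α => (β ^ 2 * (z α) ^ 2 / (α ^ 2 * (1 + β) ^ 2)) *
      ((2 * z α - α * (1 + β)) / β - 2 * Real.sqrt (z α * (p - α) / β))
    let Γ₂ : ℝ → ℝ := fun α => (β ^ 2 * (z α) ^ 2 / (α ^ 2 * (1 + β) ^ 2)) *
      ((2 * z α - α * (1 + β)) / β + 2 * Real.sqrt (z α * (p - α) / β))
    Tendsto Γ₁ (nhdsWithin 0 (Set.Ioi 0)) (nhds (β ^ 2 * p / 4)) ∧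
      Tendsto Γ₂ (nhdsWithin 0 (Set.Ioi 0)) atTop := by
  intro z Γ₁ Γ₂
  have hsum := (tendsto_bracketCentre_add_bracketRadius hβ hp.le).mono_left
    (nhdsWithin_le_nhds (s := Set.Ioi 0))
  have hz : Tendsto z (𝓝[>] 0) (𝓝 (β * p)) := by
    simpa [z] using ((continuous_const_add (β * p)).tendsto 0).mono_left nhdsWithin_le_nhds
  have hΓ₁ : ∀ᶠ α in 𝓝[>] 0, z α ^ 2 / (bracketCentre β p α + bracketRadius β p α) = Γ₁ α := by
    filter_upwards [self_mem_nhdsWithin, nhdsWithin_le_nhds (eventually_lt_nhds hp)]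
      with α (hα : 0 < α) hαp
    exact (mul_bracketCentre_sub_bracketRadius hβ hα hαp.le).symm
  have hK : Tendsto (fun α => β ^ 2 * z α ^ 2 / (α ^ 2 * (1 + β) ^ 2)) (𝓝[>] 0) atTop := by
    simp only [div_mul_eq_div_div_swap]
    exact tendsto_div_sq_nhdsGT_zero_atTop ((tendsto_const_nhds.mul (hz.pow 2)).div_const _)
      (by positivity)
  constructor
  · refine Tendsto.congr' hΓ₁ ?_
    rw [show β ^ 2 * p / 4 = (β * p) ^ 2 / (4 * p) by field_simp]
    exact (hz.pow 2).div hsum (by positivity)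
  · exact hK.atTop_mul_pos (by positivity) hsum
end

section
/- Let α > 0, β > 0, p > 0, Γ > 0, (r*, n*) = (p(1+β)/(βp+α), βp), and suppose Γ/β + r*/2 > 1. Let f(x,y) = (Γ+1)x + y and let L_{m-f} be the mean-field generator. Then there exist ε > 0 and a finite set A ⊂ (1/Γ)ℤ₊ × ℤ₊ such that (L_{m-f} f)(x,y) ≤ −ε for all lattice points (x,y) ∈ ((1/Γ)ℤ₊ × ℤ₊) \ A; one may take A = {(x,y) ∈ (1/Γ)ℤ₊ × ℤ₊ : x n*/2 + y r*/2 + αx + (Γ/β − 1)y ≤ (Γ+1)p + Γε}, which is finite. -/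
/-! Since `f` is linear, every jump changes it by a constant and
`Γ · (L_{m-f} f)(x,y) = (Γ+1)p − (n*/2 + α)x − (r*/2 + Γ/β − 1)y`.
Both coefficients are positive, the second one by `Γ/β + r*/2 > 1`, so the drift is `≤ −ε`
off a triangle, which contains only finitely many lattice points. -/

noncomputable def meanFieldGenerator (α β p Γ nstar rstar : ℝ) (g : ℝ → ℝ → ℝ) (x y : ℝ) : ℝ :=
  (1 / 2) * (x * nstar + rstar * y) * (g (x - 1 / Γ) (y + 1) - g x y)
    + α * x * (g (x - 1 / Γ) (y + 1) - g x y)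
    + y * (g (x + 1 / Γ) (y - 1) - g x y)
    + p * (g (x + 1 / Γ) y - g x y)
    + β⁻¹ * y * (g x (y - 1) - g x y)

theorem meanFieldGenerator_linear {α β p Γ : ℝ} (hβ : β ≠ 0) (hΓ : Γ ≠ 0)
    (nstar rstar x y : ℝ) :
    meanFieldGenerator α β p Γ nstar rstar (fun x y => (Γ + 1) * x + y) x y
      = ((Γ + 1) * p - (x * nstar / 2 + y * rstar / 2 + α * x + (Γ / β - 1) * y)) / Γ := by
  unfold meanFieldGenerator
  field_simp
  ring

def scaledLattice (Γ : ℝ) : Set (ℝ × ℝ) :=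
  {q | (∃ k : ℕ, q.1 = (k : ℝ) / Γ) ∧ (∃ m : ℕ, q.2 = (m : ℝ))}

theorem finite_setOf_linear_le {a b : ℝ} (ha : 0 < a) (hb : 0 < b) (C : ℝ) :
    {km : ℕ × ℕ | a * km.1 + b * km.2 ≤ C}.Finite := by
  refine ((Set.finite_Iic ⌈C / a⌉₊).prod (Set.finite_Iic ⌈C / b⌉₊)).subset ?_
  rintro ⟨k, m⟩ (h : a * k + b * m ≤ C)
  have hk : (k : ℝ) ≤ C / a := by
    rw [le_div_iff₀ ha]
    nlinarith [m.cast_nonneg (α := ℝ)]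
  have hm : (m : ℝ) ≤ C / b := by
    rw [le_div_iff₀ hb]
    nlinarith [k.cast_nonneg (α := ℝ)]
  exact ⟨Nat.cast_le.mp (hk.trans (Nat.le_ceil _)), Nat.cast_le.mp (hm.trans (Nat.le_ceil _))⟩

theorem scaledLattice_inter_finite {Γ a b : ℝ} (hΓ : 0 < Γ) (ha : 0 < a) (hb : 0 < b)
    (C : ℝ) : (scaledLattice Γ ∩ {q | a * q.1 + b * q.2 ≤ C}).Finite := by
  refine ((finite_setOf_linear_le (div_pos ha hΓ) hb C).image
    fun km : ℕ × ℕ => ((km.1 : ℝ) / Γ, (km.2 : ℝ))).subset ?_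
  rintro q ⟨⟨⟨k, hk⟩, ⟨m, hm⟩⟩, h⟩
  refine ⟨(k, m), ?_, Prod.ext hk.symm hm.symm⟩
  calc a / Γ * k + b * m = a * q.1 + b * q.2 := by rw [hk, hm]; ring
    _ ≤ C := h

/-- Ergodicity criterion for the mean-field chain: if `Γ/β + r*/2 > 1`, then
for the Lyapunov function `f(x,y) = (Γ+1)x + y` there exist `ε > 0` and a
finite set `A ⊂ (1/Γ)ℤ₊ × ℤ₊` (one may take
`A = {(x,y) : x n*/2 + y r*/2 + αx + (Γ/β − 1)y ≤ (Γ+1)p + Γε}`) such that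
`(L_{m-f} f)(x,y) ≤ −ε` for all lattice points outside `A`. -/
theorem mean_field_lyapunov_drift (α β p Γ : ℝ) (hα : 0 < α) (hβ : 0 < β)
    (hp : 0 < p) (hΓ : 0 < Γ)
    (hcond : Γ / β + (p * (1 + β) / (β * p + α)) / 2 > 1) :
    let rstar : ℝ := p * (1 + β) / (β * p + α)
    let nstar : ℝ := β * p
    let L : (ℝ → ℝ → ℝ) → ℝ → ℝ → ℝ := fun g x y =>
      (1 / 2) * (x * nstar + rstar * y) * (g (x - 1 / Γ) (y + 1) - g x y)
      + α * x * (g (x - 1 / Γ) (y + 1) - g x y)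
      + y * (g (x + 1 / Γ) (y - 1) - g x y)
      + p * (g (x + 1 / Γ) y - g x y)
      + β⁻¹ * y * (g x (y - 1) - g x y)
    let f : ℝ → ℝ → ℝ := fun x y => (Γ + 1) * x + y
    let lattice : Set (ℝ × ℝ) :=
      {q | (∃ k : ℕ, q.1 = (k : ℝ) / Γ) ∧ (∃ m : ℕ, q.2 = (m : ℝ))}
    ∃ ε > (0 : ℝ),
      let A : Set (ℝ × ℝ) := {q ∈ lattice |
        q.1 * nstar / 2 + q.2 * rstar / 2 + α * q.1 + (Γ / β - 1) * q.2
          ≤ (Γ + 1) * p + Γ * ε}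
      A.Finite ∧ ∀ q ∈ lattice, q ∉ A → L f q.1 q.2 ≤ -ε := by
  intro rstar nstar L f lattice
  have hx : 0 < nstar / 2 + α := by positivity
  have hy : 0 < rstar / 2 + (Γ / β - 1) := by linarith
  refine ⟨1, one_pos, ?_, ?_⟩
  · refine (scaledLattice_inter_finite hΓ hx hy ((Γ + 1) * p + Γ * 1)).subset ?_
    rintro q ⟨hq, hQ⟩
    exact ⟨hq, by rw [Set.mem_ofPred_eq]; linarith⟩
  · intro q hq hqA
    have hQ : (Γ + 1) * p + Γ * 1
        < q.1 * nstar / 2 + q.2 * rstar / 2 + α * q.1 + (Γ / β - 1) * q.2 :=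
      lt_of_not_ge fun h => hqA ⟨hq, h⟩
    change meanFieldGenerator α β p Γ nstar rstar f q.1 q.2 ≤ -1
    rw [meanFieldGenerator_linear hβ.ne' hΓ.ne', div_le_iff₀ hΓ]
    linarith
end
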